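/- Let σ be a well-formed trace and let (e1, e2) be a conflicting pair in σ. For any well-formed trace σ' such that σ occurs as a contiguous subtrace of σ', (e1, e2) is a sync-preserving race in σ' if and only if (e1, e2) is a sync-preserving race in σ. -/

import Mathlib

/-!
Events, traces, and predictive data races.

An event datum is a pair of a thread identifier and an operation
(read/write of a memory location, or acquire/release of a lock).
Following the convention that events of a trace are identified with
positions (hence pairwise distinct), a trace is modeled as a
duplicate-free list of event *identifiers* (natural numbers), listed
in trace order, together with a global data assignment
`ev : ℕ → EventData` giving the thread and operation of each event.
-/

inductive Op : Type
  | read : ℕ → Op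
  | write : ℕ → Op
  | acq : ℕ → Op
  | rel : ℕ → Op
  deriving DecidableEq

structure EventData : Type where
  thread : ℕ
  op : Op
  deriving DecidableEq

abbrev Trace : Type := List ℕ

namespace Race

variable (ev : ℕ → EventData)

/-- Trace order: `e1` occurs no later than `e2` in `σ`. -/
def trord (σ : Trace) (e1 e2 : ℕ) : Prop :=
  e1 ∈ σ ∧ e2 ∈ σ ∧ σ.idxOf e1 ≤ σ.idxOf e2

/-- Thread order: trace order plus equality of threads. -/
def threadOrd (σ : Trace) (e1 e2 : ℕ) : Prop :=
  trord σ e1 e2 ∧ (ev e1).thread = (ev e2).thread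

/-- Lock-semantics check: `h` records, for each lock, the thread currently
holding it.  A lock may be acquired only when free, and released only by
the thread holding it. -/
def lockOk : (ℕ → Option ℕ) → Trace → Prop
  | _, [] => True
  | h, e :: rest =>
    match (ev e).op with
    | Op.acq l => h l = none ∧ lockOk (Function.update h l (some (ev e).thread)) rest
    | Op.rel l => h l = some (ev e).thread ∧ lockOk (Function.update h l none) rest
    | _ => lockOk h rest

/-- A well-formed trace: pairwise distinct events respecting lock semantics. -/
def WellFormed (σ : Trace) : Prop := σ.Nodup ∧ lockOk ev (fun _ => none) σ

/-- A well-formed subtrace: a contiguous subtrace of some well-formed trace. -/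
def WellFormedSub (σ : Trace) : Prop :=
  ∃ pre suf : Trace, WellFormed ev (pre ++ σ ++ suf)

/-- Happens-before: the smallest partial order on the events of `σ` containing
thread order and ordering each release before every later acquire of the
same lock. -/
inductive HB (σ : Trace) : ℕ → ℕ → Prop
  | thread_order {e1 e2 : ℕ} : threadOrd ev σ e1 e2 → HB σ e1 e2
  | rel_acq {e1 e2 l : ℕ} :
      trord σ e1 e2 → (ev e1).op = Op.rel l → (ev e2).op = Op.acq l → HB σ e1 e2
  | trans {e1 e2 e3 : ℕ} : HB σ e1 e2 → HB σ e2 e3 → HB σ e1 e3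

def isWrite (o : Op) : Prop := ∃ x, o = Op.write x

/-- The memory location accessed by an operation, if any. -/
def loc : Op → Option ℕ
  | Op.read x => some x
  | Op.write x => some x
  | _ => none

/-- Conflicting events: same location, different threads, at least one write. -/
def Conflicting (e1 e2 : ℕ) : Prop :=
  (ev e1).thread ≠ (ev e2).thread ∧
  (∃ x, loc (ev e1).op = some x ∧ loc (ev e2).op = some x) ∧
  (isWrite (ev e1).op ∨ isWrite (ev e2).op)

/-- An HB race: a conflicting pair of events of `σ`, unordered by happens-before. -/
def HBRace (σ : Trace) (e1 e2 : ℕ) : Prop :=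
  e1 ∈ σ ∧ e2 ∈ σ ∧ Conflicting ev e1 e2 ∧ ¬ HB ev σ e1 e2 ∧ ¬ HB ev σ e2 e1

/-- `lw σ e`: the last write (to the location read by `e`) before `e` in `σ`. -/
def lw (σ : Trace) (e : ℕ) : Option ℕ :=
  match (ev e).op with
  | Op.read x =>
      ((σ.take (σ.idxOf e)).filter fun f => decide ((ev f).op = Op.write x)).getLast?
  | _ => none

/-- The matching release of an acquire: the first release of the same lock after it. -/
def matchRel (σ : Trace) (a : ℕ) : Option ℕ :=
  match (ev a).op with
  | Op.acq l =>
      ((σ.drop (σ.idxOf a + 1)).filter fun f => decide ((ev f).op = Op.rel l)).head?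
  | _ => none

/-- The matching acquire of a release: the last acquire of the same lock before it. -/
def matchAcq (σ : Trace) (r : ℕ) : Option ℕ :=
  match (ev r).op with
  | Op.rel l =>
      ((σ.take (σ.idxOf r)).filter fun f => decide ((ev f).op = Op.acq l)).getLast?
  | _ => none

/-- The last event of the same thread before `e` in `σ`. -/
def prevE (σ : Trace) (e : ℕ) : Option ℕ :=
  ((σ.take (σ.idxOf e)).filter fun f => decide ((ev f).thread = (ev e).thread)).getLast?

/-- `ρ` is a correct reordering of `σ`. -/
structure CorrectReordering (σ ρ : Trace) : Prop where
  wf : WellFormed ev ρ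
  subset : ∀ e ∈ ρ, e ∈ σ
  to_closed : ∀ e1 e2 : ℕ, threadOrd ev σ e1 e2 → e2 ∈ ρ → e1 ∈ ρ ∧ threadOrd ev ρ e1 e2
  lw_eq : ∀ e ∈ ρ, (∃ x, (ev e).op = Op.read x) → lw ev ρ e = lw ev σ e

/-- `e` is enabled in the correct reordering `ρ` of `σ`. -/
def Enabled (σ ρ : Trace) (e : ℕ) : Prop :=
  e ∈ σ ∧ e ∉ ρ ∧ ∀ f : ℕ, threadOrd ev σ f e → f ≠ e → f ∈ ρ

/-- A reordering is sync-preserving if acquires of a common lock keep their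
relative order from `σ`. -/
def SyncPres (σ ρ : Trace) : Prop :=
  ∀ a1 a2 l : ℕ, a1 ∈ ρ → a2 ∈ ρ → (ev a1).op = Op.acq l → (ev a2).op = Op.acq l →
    (trord ρ a1 a2 ↔ trord σ a1 a2)

/-- A sync-preserving race. -/
def SyncPresRace (σ : Trace) (e1 e2 : ℕ) : Prop :=
  e1 ∈ σ ∧ e2 ∈ σ ∧ Conflicting ev e1 e2 ∧
  ∃ ρ : Trace, CorrectReordering ev σ ρ ∧ SyncPres ev σ ρ ∧
    Enabled ev σ ρ e1 ∧ Enabled ev σ ρ e2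

/-- A predictive race. -/
def PredictiveRace (σ : Trace) (e1 e2 : ℕ) : Prop :=
  e1 ∈ σ ∧ e2 ∈ σ ∧ Conflicting ev e1 e2 ∧
  ∃ ρ : Trace, CorrectReordering ev σ ρ ∧ Enabled ev σ ρ e1 ∧ Enabled ev σ ρ e2

/-- A subset of the events of `σ`, downward closed under thread order and
closed under last-writes. -/
def TLClosed (σ : Trace) (S : Set ℕ) : Prop :=
  (∀ e ∈ S, e ∈ σ) ∧
  (∀ e1 e2 : ℕ, threadOrd ev σ e1 e2 → e2 ∈ S → e1 ∈ S) ∧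
  (∀ e ∈ S, ∀ f : ℕ, lw ev σ e = some f → f ∈ S)

/-- The smallest TL-closed set containing `S`. -/
def TLClosure (σ : Trace) (S : Set ℕ) : Set ℕ :=
  ⋂₀ {C : Set ℕ | TLClosed ev σ C ∧ S ⊆ C}

/-- Sync-preserving closed sets. -/
def SPClosed (σ : Trace) (S : Set ℕ) : Prop :=
  TLClosed ev σ S ∧
  ∀ a1 a2 l : ℕ, a1 ∈ S → a2 ∈ S → (ev a1).op = Op.acq l → (ev a2).op = Op.acq l →
    trord σ a1 a2 → a1 ≠ a2 → ∀ r : ℕ, matchRel ev σ a1 = some r → r ∈ S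

/-- The smallest sync-preserving closed set containing `S`. -/
def SPClosure (σ : Trace) (S : Set ℕ) : Set ℕ :=
  ⋂₀ {C : Set ℕ | SPClosed ev σ C ∧ S ⊆ C}

/-- `SPIdeal σ e1 e2 = SPClosure σ ({prev σ e1, prev σ e2} \ {⊥})`. -/
def SPIdeal (σ : Trace) (e1 e2 : ℕ) : Set ℕ :=
  SPClosure ev σ {f : ℕ | prevE ev σ e1 = some f ∨ prevE ev σ e2 = some f}

/-- Local time: the number of events strictly below `e` in thread order. -/
def ltime (σ : Trace) (e : ℕ) : ℕ :=
  ((σ.take (σ.idxOf e)).filter fun f => decide ((ev f).thread = (ev e).thread)).length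

/-- Causal timestamp: for each thread `t`, the maximum local time of an
event of thread `t` happening before `e` (and `-1` if there is none). -/
noncomputable def ctime (σ : Trace) (e : ℕ) (t : ℕ) : ℤ :=
  sSup (insert (-1)
    {n : ℤ | ∃ f ∈ σ, (ev f).thread = t ∧ HB ev σ f e ∧ n = (ltime ev σ f : ℤ)})

end Race

/-!
A sync-preserving correct reordering `ρ` of `σ` extends to the reordering `pre ++ ρ` of
`pre ++ σ ++ suf`: the prefix `pre` is closed under thread order and last writes, and every
lock used by `σ` is free after `pre`, since `σ`, being well formed on its own, acquires such a
lock before releasing it.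

Conversely, a sync-preserving correct reordering `ρ'` of `pre ++ σ ++ suf` restricts to the
subsequence `σ.filter (· ∈ ρ')` of `σ`. Thread order and last writes pass to it directly. As for
a lock, restricting its critical sections in `σ` can only drop a release whose acquire is the
last kept acquire of that lock: if two acquires of the lock are kept, the critical section of
the earlier one in `ρ'` is, by sync-preservation, also a critical section of
`pre ++ σ ++ suf`, so its release belongs to `ρ'`.
-/

namespace List

theorem getLast?_filter_of_getLast? {α : Type*} {l : List α} {p : α → Bool}
    (h : ∀ w, l.getLast? = some w → p w) : (l.filter p).getLast? = l.getLast? := by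
  rcases eq_nil_or_concat l with rfl | ⟨l, w, rfl⟩
  · rfl
  · simp_all [filter_append]

variable {α : Type*} [BEq α] [LawfulBEq α]

theorem idxOf_le_idxOf_iff_of_sublist {l₁ l₂ : List α} {a b : α} (h : l₁ <+ l₂)
    (hnd : l₂.Nodup) (ha : a ∈ l₁) (hb : b ∈ l₁) :
    l₁.idxOf a ≤ l₁.idxOf b ↔ l₂.idxOf a ≤ l₂.idxOf b := by
  induction h with
  | slnil => simp at ha
  | cons x h ih =>
    obtain ⟨hx, hnd⟩ := nodup_cons.1 hnd
    rw [idxOf_cons_ne _ (ne_of_mem_of_not_mem (h.subset ha) hx).symm,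
      idxOf_cons_ne _ (ne_of_mem_of_not_mem (h.subset hb) hx).symm]
    simpa using ih hnd ha hb
  | cons_cons x h ih =>
    obtain ⟨hx, hnd⟩ := nodup_cons.1 hnd
    by_cases hax : a = x
    · simp [hax]
    by_cases hbx : b = x
    · simp [hbx, idxOf_cons_ne _ (Ne.symm hax)]
    have ha' := (mem_cons.1 ha).resolve_left hax
    have hb' := (mem_cons.1 hb).resolve_left hbx
    simpa [idxOf_cons_ne _ (Ne.symm hax), idxOf_cons_ne _ (Ne.symm hbx)] using ih hnd ha' hb'

theorem idxOf_of_infix_pair {l : List α} {x y : α} (hnd : l.Nodup) (h : [x, y] <:+: l) :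
    l.idxOf y = l.idxOf x + 1 := by
  obtain ⟨s, t, rfl⟩ := h
  simp only [append_assoc, cons_append, nil_append, nodup_append, nodup_cons, mem_cons,
    not_or] at hnd
  have hx : x ∉ s := fun hx => hnd.2.2 x hx x (.inl rfl) rfl
  have hy : y ∉ s := fun hy => hnd.2.2 y hy y (.inr (.inl rfl)) rfl
  simp [idxOf_append_of_notMem hx, idxOf_append_of_notMem hy, idxOf_cons_ne _ hnd.2.1.1.1]

theorem take_idxOf_filter {l : List α} {p : α → Bool} {a : α} (hnd : l.Nodup) (ha : a ∈ l)
    (hpa : p a) : (l.filter p).take ((l.filter p).idxOf a) = (l.take (l.idxOf a)).filter p := by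
  obtain ⟨s, t, rfl⟩ := append_of_mem ha
  have has : a ∉ s := fun h => (nodup_append.1 hnd).2.2 a h a mem_cons_self rfl
  have has' : a ∉ s.filter p := fun h => has (mem_filter.1 h).1
  simp [filter_append, hpa, idxOf_append_of_notMem has,
    idxOf_append_of_notMem has']

theorem eq_of_infix_pair_of_infix_pair {l : List α} {x y z : α} (hnd : l.Nodup)
    (hy : [x, y] <:+: l) (hz : [x, z] <:+: l) : y = z :=
  (idxOf_inj (hy.subset (by simp))).1 <| by
    rw [idxOf_of_infix_pair hnd hy, idxOf_of_infix_pair hnd hz]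

end List

namespace Race

open scoped List

section TraceOrder

variable {τ ρ A B C : Trace} {a b x y : ℕ}

theorem trord_iff_of_sublist (h : ρ <+ τ) (hnd : τ.Nodup) (ha : a ∈ ρ) (hb : b ∈ ρ) :
    trord ρ a b ↔ trord τ a b := by
  simp only [trord, ha, hb, h.subset ha, h.subset hb, true_and,
    List.idxOf_le_idxOf_iff_of_sublist h hnd ha hb]

theorem threadOrd_iff_of_sublist (ev : ℕ → EventData) (h : ρ <+ τ) (hnd : τ.Nodup)
    (ha : a ∈ ρ) (hb : b ∈ ρ) : threadOrd ev ρ a b ↔ threadOrd ev τ a b :=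
  and_congr_left' (trord_iff_of_sublist h hnd ha hb)

theorem eq_of_trord_of_trord (hab : trord τ a b) (hba : trord τ b a) : a = b :=
  (List.idxOf_inj hab.1).1 (le_antisymm hab.2.2 hba.2.2)

theorem trord_of_pair_sublist (hnd : τ.Nodup) (h : [a, b] <+ τ) : trord τ a b :=
  (trord_iff_of_sublist h hnd (by simp) (by simp)).1 ⟨by simp, by simp, by simp⟩

theorem trord_filter_iff {p : ℕ → Bool} (hnd : τ.Nodup) (ha : a ∈ τ.filter p)
    (hb : b ∈ τ.filter p) : trord (τ.filter p) a b ↔ trord τ a b :=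
  trord_iff_of_sublist List.filter_sublist hnd ha hb

theorem trord_of_infix_pair_filter {p : ℕ → Bool} (hnd : τ.Nodup) (h : [a, b] <:+: τ.filter p) :
    trord τ a b :=
  trord_of_pair_sublist hnd (h.sublist.trans List.filter_sublist)

theorem trord_append (hnd : (A ++ B).Nodup) (ha : a ∈ A) (hb : b ∈ B) : trord (A ++ B) a b :=
  trord_of_pair_sublist hnd ((List.singleton_sublist.2 ha).append (List.singleton_sublist.2 hb))

theorem mem_left_of_trord_append (hnd : (A ++ B).Nodup) (hb : b ∈ A)
    (h : trord (A ++ B) a b) : a ∈ A := by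
  rcases List.mem_append.1 h.1 with ha | ha
  · exact ha
  · exact eq_of_trord_of_trord h (trord_append hnd hb ha) ▸ hb

theorem trord_or_trord_of_infix_pair (hnd : τ.Nodup) (hxy : [x, y] <:+: τ) (ha : a ∈ τ) :
    trord τ a x ∨ trord τ y a := by
  have hx : x ∈ τ := hxy.subset (by simp)
  have hy : y ∈ τ := hxy.subset (by simp)
  have := List.idxOf_of_infix_pair hnd hxy
  by_cases h : τ.idxOf a ≤ τ.idxOf x
  · exact .inl ⟨ha, hx, h⟩
  · exact .inr ⟨hy, ha, by omega⟩

theorem trord_append_iff_append (hB : (A ++ B).Nodup) (hC : (A ++ C).Nodup)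
    (hBC : ∀ e ∈ B, e ∈ C) (ha : a ∈ A ++ B) (hb : b ∈ A ++ B)
    (h : a ∈ B → b ∈ B → (trord B a b ↔ trord C a b)) :
    trord (A ++ B) a b ↔ trord (A ++ C) a b := by
  have hAB := List.disjoint_of_nodup_append hB
  rcases List.mem_append.1 ha with ha | ha <;> rcases List.mem_append.1 hb with hb | hb
  · rw [← trord_iff_of_sublist (List.sublist_append_left A B) hB ha hb,
      trord_iff_of_sublist (List.sublist_append_left A C) hC ha hb]
  · exact iff_of_true (trord_append hB ha hb) (trord_append hC ha (hBC b hb))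
  · refine iff_of_false (fun hab => ?_) (fun hab => ?_)
    · exact hAB hb (eq_of_trord_of_trord hab (trord_append hB hb ha) ▸ ha)
    · exact hAB hb (eq_of_trord_of_trord hab (trord_append hC hb (hBC a ha)) ▸ ha)
  · rw [← trord_iff_of_sublist (List.sublist_append_right A B) hB ha hb, h ha hb,
      trord_iff_of_sublist (List.sublist_append_right A C) hC (hBC a ha) (hBC b hb)]

theorem exists_infix_pair_of_trord (hnd : τ.Nodup) (h : trord τ a b)
    (hne : a ≠ b) : ∃ c, [a, c] <:+: τ := by
  obtain ⟨s, t, rfl⟩ := List.append_of_mem h.1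
  cases t with
  | cons c t => exact ⟨c, s, t, by simp⟩
  | nil =>
    rcases List.mem_append.1 h.2.1 with hb | hb
    · exact absurd (eq_of_trord_of_trord h (trord_append hnd hb (List.mem_singleton_self a))) hne
    · exact absurd (List.mem_singleton.1 hb).symm hne

end TraceOrder

section LastWrite

variable {ev : ℕ → EventData} {τ A B pre σ suf : Trace} {e w x : ℕ}

theorem lw_of_read (hop : (ev e).op = Op.read x) :
    lw ev τ e =
      ((τ.take (τ.idxOf e)).filter fun f => decide ((ev f).op = Op.write x)).getLast? := by
  simp only [lw, hop]

theorem mem_of_lw_eq_some (h : lw ev τ e = some w) : w ∈ τ := by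
  unfold lw at h
  split at h
  · exact List.mem_of_mem_take (List.mem_filter.1 (List.mem_of_getLast? h)).1
  · simp at h

theorem lw_append_of_mem (he : e ∈ A) : lw ev (A ++ B) e = lw ev A e := by
  unfold lw
  split
  · rw [List.idxOf_append_of_mem he,
      List.take_append_of_le_length (List.idxOf_lt_length_of_mem he).le]
  · rfl

theorem lw_append_of_not_mem (he : e ∉ A) (hop : (ev e).op = Op.read x) :
    lw ev (A ++ B) e =
      (lw ev B e).or ((A.filter fun f => decide ((ev f).op = Op.write x)).getLast?) := by
  rw [lw_of_read hop, lw_of_read hop, List.idxOf_append_of_notMem he, List.take_length_add_append,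
    List.filter_append, List.getLast?_append]

theorem lw_filter {p : ℕ → Bool} (hnd : τ.Nodup) (he : e ∈ τ) (hpe : p e)
    (hw : ∀ w, lw ev τ e = some w → p w) : lw ev (τ.filter p) e = lw ev τ e := by
  unfold lw at hw ⊢
  split
  · rename_i hop
    simp only [hop] at hw
    rw [List.take_idxOf_filter hnd he hpe, List.filter_filter]
    simp only [Bool.and_comm]
    rw [← List.filter_filter]
    exact List.getLast?_filter_of_getLast? hw
  · rfl

theorem lw_append_append (hnd : (pre ++ σ ++ suf).Nodup) (he : e ∈ σ)
    (hop : (ev e).op = Op.read x) :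
    lw ev (pre ++ σ ++ suf) e =
      (lw ev σ e).or ((pre.filter fun f => decide ((ev f).op = Op.write x)).getLast?) := by
  rw [List.append_assoc] at hnd ⊢
  rw [lw_append_of_not_mem (fun h => List.disjoint_of_nodup_append hnd h (by simp [he])) hop,
    lw_append_of_mem he]

end LastWrite

section Locks

variable (ev : ℕ → EventData)

def touchesLock (l e : ℕ) : Bool :=
  decide ((ev e).op = Op.acq l) || decide ((ev e).op = Op.rel l)

def Alternates (l : ℕ) : Option ℕ → Trace → Prop
  | _, [] => True
  | none, e :: r => (ev e).op = Op.acq l ∧ Alternates l (some (ev e).thread) r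
  | some t, e :: r => (ev e).op = Op.rel l ∧ (ev e).thread = t ∧ Alternates l none r

def holderAfter (l : ℕ) : Option ℕ → Trace → Option ℕ
  | s, [] => s
  | _, e :: r => holderAfter l (if (ev e).op = Op.acq l then some (ev e).thread else none) r

variable {ev}

theorem mem_filter_touchesLock {τ : Trace} {l e : ℕ} :
    e ∈ τ.filter (touchesLock ev l) ↔ e ∈ τ ∧ ((ev e).op = Op.acq l ∨ (ev e).op = Op.rel l) := by
  simp [touchesLock]

theorem lockOk_iff_forall_alternates {τ : Trace} {h : ℕ → Option ℕ} :
    lockOk ev h τ ↔ ∀ l, Alternates ev l (h l) (τ.filter (touchesLock ev l)) := by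
  induction τ generalizing h with
  | nil => simp [lockOk, Alternates]
  | cons e τ ih =>
    rcases hop : (ev e).op with x | x | l₀ | l₀
    · simp [lockOk, hop, ih, touchesLock]
    · simp [lockOk, hop, ih, touchesLock]
    all_goals
      simp only [lockOk, hop, ih, touchesLock, List.filter_cons]
      -- only the state and the projection of `l₀` change
      conv_rhs => rw [← and_forall_ne l₀]
      rw [Function.forall_update_iff h
        (p := fun l s => Alternates ev l s (τ.filter (touchesLock ev l)))]
      rcases h l₀ with _ | t <;> simp +contextual [Alternates, hop, Ne.symm, eq_comm, and_assoc]

variable {l x y : ℕ} {s : Option ℕ} {L : Trace}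

theorem alternates_append {A B : Trace} :
    Alternates ev l s (A ++ B) ↔
      Alternates ev l s A ∧ Alternates ev l (holderAfter ev l s A) B := by
  induction A generalizing s with
  | nil => simp [Alternates, holderAfter]
  | cons e A ih => cases s <;> simp +contextual [Alternates, holderAfter, ih, and_assoc]

theorem Alternates.op_of_mem (h : Alternates ev l s L) (hx : x ∈ L) :
    (ev x).op = Op.acq l ∨ (ev x).op = Op.rel l := by
  obtain ⟨u, v, rfl⟩ := List.append_of_mem hx
  have := (alternates_append.1 h).2
  generalize holderAfter ev l s u = s' at this
  cases s' <;> simp only [Alternates] at this <;> tauto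

theorem Alternates.of_infix_pair (h : Alternates ev l s L) (hxy : [x, y] <:+: L) :
    ((ev x).op = Op.acq l ∧ (ev y).op = Op.rel l ∧ (ev y).thread = (ev x).thread) ∨
      ((ev x).op = Op.rel l ∧ (ev y).op = Op.acq l) := by
  obtain ⟨u, v, rfl⟩ := hxy
  have := (alternates_append.1 (List.append_assoc u _ v ▸ h)).2
  generalize holderAfter ev l s u = s' at this
  cases s' <;> simp only [Alternates, List.cons_append, List.nil_append] at this
  · exact .inl ⟨this.1, this.2.1, this.2.2.1⟩
  · exact .inr ⟨this.1, this.2.2.1⟩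

theorem Alternates.rel_of_infix_pair_of_acq (h : Alternates ev l s L) (hxy : [x, y] <:+: L)
    (hx : (ev x).op = Op.acq l) : (ev y).op = Op.rel l ∧ (ev y).thread = (ev x).thread := by
  rcases h.of_infix_pair hxy with h | h
  · exact h.2
  · simp [hx] at h

theorem Alternates.acq_of_infix_pair_of_rel (h : Alternates ev l s L) (hxy : [x, y] <:+: L)
    (hy : (ev y).op = Op.rel l) : (ev x).op = Op.acq l ∧ (ev y).thread = (ev x).thread := by
  rcases h.of_infix_pair hxy with h | h
  · exact ⟨h.1, h.2.2⟩
  · simp [hy] at h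

theorem Alternates.exists_infix_pair_of_rel (h : Alternates ev l none L) (hy : y ∈ L)
    (hrel : (ev y).op = Op.rel l) : ∃ x, [x, y] <:+: L := by
  obtain ⟨u, v, rfl⟩ := List.append_of_mem hy
  rcases List.eq_nil_or_concat u with rfl | ⟨u, x, rfl⟩
  · simp [Alternates, hrel] at h
  · exact ⟨x, u, v, by simp⟩

theorem Alternates.filter (P : ℕ → Bool) : ∀ {L : Trace}, Alternates ev l none L →
    (∀ x y, [x, y] <:+: L → (ev y).op = Op.rel l → P y → P x) →
    (∀ x y v z, x :: y :: v <:+ L → (ev x).op = Op.acq l → z ∈ v → (ev z).op = Op.acq l →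
      P x → P z → P y) →
    Alternates ev l none (L.filter P)
  | [], _, _, _ => trivial
  | [a], h, _, _ => by cases hPa : P a <;> simp [hPa, Alternates, h.1]
  | a :: r :: M, ⟨ha, hr, hth, hM⟩, hrel, hacq => by
    have ih := Alternates.filter P hM
      (fun x y hxy => hrel x y (List.infix_cons (List.infix_cons hxy)))
      (fun x y v z hs => hacq x y v z (hs.trans (List.suffix_append [a, r] M)))
    by_cases hPr : P r
    · have hPa := hrel a r ⟨[], M, rfl⟩ hr hPr
      simpa [hPa, hPr, Alternates, ha, hr, hth] using ih
    by_cases hPa : P a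
    -- `a` is kept without its release, so nothing after it may be kept
    · have hacqM : ∀ z ∈ M, (ev z).op = Op.acq l → ¬ P z := fun z hz hz' hPz =>
        hPr (hacq a r M z (List.suffix_refl _) ha hz hz' hPa hPz)
      have hnil : M.filter P = [] := List.filter_eq_nil_iff.2 fun q hq hPq => by
        rcases hM.op_of_mem hq with hq' | hq'
        · exact hacqM q hq hq' hPq
        · obtain ⟨x, hxq⟩ := hM.exists_infix_pair_of_rel hq hq'
          exact hacqM x (hxq.subset (by simp)) (hM.acq_of_infix_pair_of_rel hxq hq').1
            (hrel x q (List.infix_cons (List.infix_cons hxq)) hq' hPq)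
      simp [hPa, hPr, hnil, Alternates, ha]
    · simpa [hPa, hPr] using ih

end Locks

section Reordering

variable {ev : ℕ → EventData} {τ ρ : Trace} {l x y : ℕ}

theorem CorrectReordering.mem_of_infix_pair_of_rel (hτ : WellFormed ev τ)
    (hcr : CorrectReordering ev τ ρ) (hxy : [x, y] <:+: τ.filter (touchesLock ev l))
    (hy : (ev y).op = Op.rel l) (hyρ : y ∈ ρ) : x ∈ ρ := by
  have hth := ((lockOk_iff_forall_alternates.1 hτ.2 l).acq_of_infix_pair_of_rel hxy hy).2
  exact (hcr.to_closed x y ⟨trord_of_infix_pair_filter hτ.1 hxy, hth.symm⟩ hyρ).1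

/-- A critical section of a sync-preserving reordering is a critical section of the
original trace. -/
theorem CorrectReordering.infix_pair_of_infix_pair (hτ : WellFormed ev τ)
    (hcr : CorrectReordering ev τ ρ) (hsp : SyncPres ev τ ρ) (hx : (ev x).op = Op.acq l)
    (hxy : [x, y] <:+: ρ.filter (touchesLock ev l)) :
    [x, y] <:+: τ.filter (touchesLock ev l) := by
  have hndM : (ρ.filter (touchesLock ev l)).Nodup := hcr.wf.1.filter _
  have hAltN := lockOk_iff_forall_alternates.1 hτ.2 l
  obtain ⟨hy, hthx⟩ :=
    (lockOk_iff_forall_alternates.1 hcr.wf.2 l).rel_of_infix_pair_of_acq hxy hx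
  have hxM := hxy.subset (by simp : x ∈ [x, y])
  have hyM := hxy.subset (by simp : y ∈ [x, y])
  have hxρ := (mem_filter_touchesLock.1 hxM).1
  have hyρ := (mem_filter_touchesLock.1 hyM).1
  have hxN := mem_filter_touchesLock.2 ⟨hcr.subset x hxρ, .inl hx⟩
  have hyN := mem_filter_touchesLock.2 ⟨hcr.subset y hyρ, .inr hy⟩
  obtain ⟨x', hx'y⟩ := hAltN.exists_infix_pair_of_rel hyN hy
  suffices x' = x from this ▸ hx'y
  obtain ⟨hx', hthx'⟩ := hAltN.acq_of_infix_pair_of_rel hx'y hy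
  obtain ⟨hx'ρ, hx'yρ, -⟩ :=
    hcr.to_closed x' y ⟨trord_of_infix_pair_filter hτ.1 hx'y, hthx'.symm⟩ hyρ
  have hx'N := hx'y.subset (by simp : x' ∈ [x', y])
  have hx'M := mem_filter_touchesLock.2 ⟨hx'ρ, .inl hx'⟩
  have hxx' : trord τ x x' := by
    rcases trord_or_trord_of_infix_pair (hτ.1.filter _) hx'y hxN with h | h
    · exact (trord_filter_iff hτ.1 hxN hx'N).1 h
    -- otherwise `y` precedes `x` in their common thread, hence also in `ρ`
    have hyxρ := (hcr.to_closed y x ⟨(trord_filter_iff hτ.1 hyN hxN).1 h, hthx⟩ hxρ).2.1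
    have := eq_of_trord_of_trord ((trord_filter_iff hcr.wf.1 hyM hxM).2 hyxρ)
      (trord_of_pair_sublist hndM hxy.sublist)
    simp [this, hx] at hy
  -- otherwise `x'` lies strictly between `x` and `y` in `ρ`
  by_contra hne
  have hxx'ρ : trord ρ x x' := (hsp x x' l hxρ hx'ρ hx hx').2 hxx'
  rcases trord_or_trord_of_infix_pair hndM hxy hx'M with h | h
  · exact hne (eq_of_trord_of_trord h ((trord_filter_iff hcr.wf.1 hxM hx'M).2 hxx'ρ))
  · have := eq_of_trord_of_trord h ((trord_filter_iff hcr.wf.1 hx'M hyM).2 hx'yρ)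
    simp [this, hx'] at hy

theorem CorrectReordering.mem_of_infix_pair_of_acq {z : ℕ} (hτ : WellFormed ev τ)
    (hcr : CorrectReordering ev τ ρ) (hsp : SyncPres ev τ ρ)
    (hxy : [x, y] <:+: τ.filter (touchesLock ev l)) (hx : (ev x).op = Op.acq l) (hxρ : x ∈ ρ)
    (hz : (ev z).op = Op.acq l) (hzρ : z ∈ ρ) (hxz : trord τ x z) (hne : x ≠ z) : y ∈ ρ := by
  have hxM := mem_filter_touchesLock.2 ⟨hxρ, .inl hx⟩
  have hzM := mem_filter_touchesLock.2 ⟨hzρ, .inl hz⟩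
  have hxzM := (trord_filter_iff hcr.wf.1 hxM hzM).2 ((hsp x z l hxρ hzρ hx hz).2 hxz)
  obtain ⟨y', hxy'⟩ := exists_infix_pair_of_trord (hcr.wf.1.filter _) hxzM hne
  rw [List.eq_of_infix_pair_of_infix_pair (hτ.1.filter _) hxy
    (hcr.infix_pair_of_infix_pair hτ hsp hx hxy')]
  exact (mem_filter_touchesLock.1 (hxy'.subset (by simp))).1

end Reordering

section Restriction

variable {ev : ℕ → EventData} {pre σ suf ρ : Trace}

theorem lockOk_filter_mem (hσ : WellFormed ev σ) (hτ : WellFormed ev (pre ++ σ ++ suf))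
    (hcr : CorrectReordering ev (pre ++ σ ++ suf) ρ) (hsp : SyncPres ev (pre ++ σ ++ suf) ρ) :
    lockOk ev (fun _ => none) (σ.filter (· ∈ ρ)) := by
  refine lockOk_iff_forall_alternates.2 fun l => ?_
  have hinf : σ.filter (touchesLock ev l) <:+: (pre ++ σ ++ suf).filter (touchesLock ev l) :=
    (List.infix_append pre σ suf).filter _
  rw [List.filter_filter, funext fun e => Bool.and_comm _ _, ← List.filter_filter]
  refine (lockOk_iff_forall_alternates.1 hσ.2 l).filter _ (fun x y hxy hy hPy => ?_)
    (fun x y v z hs hx hzv hz hPx hPz => ?_)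
  · simpa using hcr.mem_of_infix_pair_of_rel hτ (hxy.trans hinf) hy (by simpa using hPy)
  · have hsub : [x, z] <+ σ.filter (touchesLock ev l) := by
      refine List.Sublist.trans ?_ hs.sublist
      simp [hzv]
    have hne : x ≠ z := by
      rintro rfl
      exact (List.nodup_cons.1 ((hσ.1.filter _).sublist hs.sublist)).1 (by simp [hzv])
    have hxz : trord (pre ++ σ ++ suf) x z :=
      trord_of_pair_sublist hτ.1 (hsub.trans (hinf.sublist.trans List.filter_sublist))
    simpa using hcr.mem_of_infix_pair_of_acq hτ hsp
      ((List.prefix_append [x, y] v).isInfix.trans (hs.isInfix.trans hinf)) hx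
      (by simpa using hPx) hz (by simpa using hPz) hxz hne

theorem CorrectReordering.restrict (hσ : WellFormed ev σ) (hτ : WellFormed ev (pre ++ σ ++ suf))
    (hcr : CorrectReordering ev (pre ++ σ ++ suf) ρ) (hsp : SyncPres ev (pre ++ σ ++ suf) ρ) :
    CorrectReordering ev σ (σ.filter (· ∈ ρ)) where
  wf := ⟨hσ.1.filter _, lockOk_filter_mem hσ hτ hcr hsp⟩
  subset _ he := (List.mem_filter.1 he).1
  to_closed f e hfe he := by
    obtain ⟨heσ, heρ⟩ : e ∈ σ ∧ e ∈ ρ := by simpa using he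
    have hfe' := (threadOrd_iff_of_sublist ev (List.infix_append pre σ suf).sublist hτ.1
      hfe.1.1 heσ).1 hfe
    have hf : f ∈ σ.filter (· ∈ ρ) := by simpa [hfe.1.1] using (hcr.to_closed f e hfe' heρ).1
    exact ⟨hf, (threadOrd_iff_of_sublist ev List.filter_sublist hσ.1 hf he).2 hfe⟩
  lw_eq e he hread := by
    obtain ⟨heσ, heρ⟩ : e ∈ σ ∧ e ∈ ρ := by simpa using he
    obtain ⟨x, hop⟩ := hread
    refine lw_filter hσ.1 heσ (by simpa using heρ) fun w hw => ?_
    have : lw ev ρ e = some w := by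
      rw [hcr.lw_eq e heρ ⟨x, hop⟩, lw_append_append hτ.1 heσ hop, hw, Option.some_or]
    simpa using mem_of_lw_eq_some this

theorem syncPres_filter (hnd : σ.Nodup) (p : ℕ → Bool) : SyncPres ev σ (σ.filter p) :=
  fun _ _ _ ha hb _ _ => trord_filter_iff hnd ha hb

theorem Enabled.restrict {e : ℕ} (hnd : (pre ++ σ ++ suf).Nodup) (he : e ∈ σ)
    (h : Enabled ev (pre ++ σ ++ suf) ρ e) : Enabled ev σ (σ.filter (· ∈ ρ)) e := by
  obtain ⟨-, heρ, hpred⟩ := h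
  refine ⟨he, fun h => heρ (by simpa using (List.mem_filter.1 h).2), fun f hfe hne => ?_⟩
  have hfe' := (threadOrd_iff_of_sublist ev (List.infix_append pre σ suf).sublist hnd
    hfe.1.1 he).1 hfe
  simpa [hfe.1.1] using hpred f hfe' hne

end Restriction

section Extension

variable {ev : ℕ → EventData} {pre σ suf ρ : Trace}

theorem lockOk_prepend (hσ : lockOk ev (fun _ => none) σ)
    (hτ : lockOk ev (fun _ => none) (pre ++ σ ++ suf)) (hρ : lockOk ev (fun _ => none) ρ)
    (hsub : ∀ e ∈ ρ, e ∈ σ) : lockOk ev (fun _ => none) (pre ++ ρ) := by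
  rw [lockOk_iff_forall_alternates] at *
  intro l
  have h := hτ l
  rw [List.filter_append, List.filter_append, alternates_append, alternates_append] at h
  rw [List.filter_append, alternates_append]
  refine ⟨h.1.1, ?_⟩
  rcases hρl : ρ.filter (touchesLock ev l) with _ | ⟨c, C⟩
  · trivial
  -- `σ` uses the lock `l`, and it starts by acquiring it, so `l` is free after `pre`
  have hc : c ∈ σ.filter (touchesLock ev l) := by
    have := List.mem_filter.1 (hρl ▸ List.mem_cons_self : c ∈ ρ.filter (touchesLock ev l))
    exact List.mem_filter.2 ⟨hsub c this.1, this.2⟩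
  have hfree : holderAfter ev l none (pre.filter (touchesLock ev l)) = none := by
    obtain ⟨d, D, hσl⟩ := List.exists_cons_of_ne_nil (List.ne_nil_of_mem hc)
    have h₁ := hσ l
    have h₂ := h.1.2
    rw [hσl] at h₁ h₂
    generalize holderAfter ev l none (pre.filter (touchesLock ev l)) = s at h₂ ⊢
    cases s
    · rfl
    · simp [Alternates, h₁.1] at h₂
  rw [hfree, ← hρl]
  exact hρ l

theorem nodup_prepend (hτ : (pre ++ σ ++ suf).Nodup) (hρ : ρ.Nodup) (hsub : ∀ e ∈ ρ, e ∈ σ) :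
    (pre ++ ρ).Nodup := by
  rw [List.append_assoc, List.nodup_append] at hτ
  exact List.nodup_append.2 ⟨hτ.1, hρ, fun a ha b hb => hτ.2.2 a ha b (by simp [hsub b hb])⟩

theorem trord_prepend_iff {a b : ℕ} (hτ : (pre ++ σ ++ suf).Nodup) (hρ : ρ.Nodup)
    (hsub : ∀ e ∈ ρ, e ∈ σ) (ha : a ∈ pre ++ ρ) (hb : b ∈ pre ++ ρ)
    (h : a ∈ ρ → b ∈ ρ → (trord ρ a b ↔ trord σ a b)) :
    trord (pre ++ ρ) a b ↔ trord (pre ++ σ ++ suf) a b := by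
  have hps : pre ++ σ <+ pre ++ σ ++ suf := List.sublist_append_left _ _
  have hmem : ∀ e ∈ pre ++ ρ, e ∈ pre ++ σ := fun e he => by
    rcases List.mem_append.1 he with he | he <;> simp [he, hsub]
  rw [trord_append_iff_append (nodup_prepend hτ hρ hsub) (hτ.sublist hps) hsub ha hb h,
    trord_iff_of_sublist hps hτ (hmem a ha) (hmem b hb)]

theorem CorrectReordering.prepend (hσ : WellFormed ev σ) (hτ : WellFormed ev (pre ++ σ ++ suf))
    (hcr : CorrectReordering ev σ ρ) : CorrectReordering ev (pre ++ σ ++ suf) (pre ++ ρ) where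
  wf := ⟨nodup_prepend hτ.1 hcr.wf.1 hcr.subset, lockOk_prepend hσ.2 hτ.2 hcr.wf.2 hcr.subset⟩
  subset e he := by rcases List.mem_append.1 he with he | he <;> simp [he, hcr.subset]
  to_closed f e hfe he := by
    have hsσ : σ <+ pre ++ σ ++ suf := (List.infix_append pre σ suf).sublist
    have hf : f ∈ pre ++ ρ := by
      rcases List.mem_append.1 he with he | he
      · rw [List.append_assoc] at hfe hτ
        exact List.mem_append_left _ (mem_left_of_trord_append hτ.1 he hfe.1)
      · rcases List.mem_append.1 (mem_left_of_trord_append hτ.1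
          (List.mem_append_right pre (hcr.subset e he)) hfe.1) with hf | hf
        · exact List.mem_append_left _ hf
        · exact List.mem_append_right _ (hcr.to_closed f e
            ((threadOrd_iff_of_sublist ev hsσ hτ.1 hf (hcr.subset e he)).2 hfe) he).1
    refine ⟨hf, (trord_prepend_iff hτ.1 hcr.wf.1 hcr.subset hf he fun hfρ heρ => ?_).2 hfe.1,
      hfe.2⟩
    have hfeσ := (threadOrd_iff_of_sublist ev hsσ hτ.1 (hcr.subset f hfρ)
      (hcr.subset e heρ)).2 hfe
    exact iff_of_true (hcr.to_closed f e hfeσ heρ).2.1 hfeσ.1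
  lw_eq e he hread := by
    obtain ⟨x, hop⟩ := hread
    rcases List.mem_append.1 he with he | he
    · rw [lw_append_of_mem he, List.append_assoc, lw_append_of_mem he]
    · have hpre : e ∉ pre := fun h => List.disjoint_of_nodup_append
        (nodup_prepend hτ.1 hcr.wf.1 hcr.subset) h he
      rw [lw_append_of_not_mem hpre hop, hcr.lw_eq e he ⟨x, hop⟩,
        lw_append_append hτ.1 (hcr.subset e he) hop]

theorem SyncPres.prepend (hτ : (pre ++ σ ++ suf).Nodup) (hρ : ρ.Nodup) (hsub : ∀ e ∈ ρ, e ∈ σ)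
    (hsp : SyncPres ev σ ρ) : SyncPres ev (pre ++ σ ++ suf) (pre ++ ρ) :=
  fun a b l ha hb hal hbl =>
    trord_prepend_iff hτ hρ hsub ha hb fun ha hb => hsp a b l ha hb hal hbl

theorem Enabled.prepend {e : ℕ} (hτ : (pre ++ σ ++ suf).Nodup) (h : Enabled ev σ ρ e) :
    Enabled ev (pre ++ σ ++ suf) (pre ++ ρ) e := by
  obtain ⟨he, heρ, hpred⟩ := h
  refine ⟨by simp [he], fun h => ?_, fun f hfe hne => ?_⟩
  · rcases List.mem_append.1 h with h | h
    · rw [List.append_assoc] at hτ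
      exact List.disjoint_of_nodup_append hτ h (by simp [he])
    · exact heρ h
  · rcases List.mem_append.1 (mem_left_of_trord_append hτ (List.mem_append_right pre he)
      hfe.1) with hf | hf
    · exact List.mem_append_left _ hf
    · exact List.mem_append_right _ (hpred f ((threadOrd_iff_of_sublist ev
        (List.infix_append pre σ suf).sublist hτ hf he).2 hfe) hne)

end Extension

end Race

open Race in
theorem syncpres_race_subtrace_iff_general (ev : ℕ → EventData) (σ pre suf : Trace)
    (hwf : WellFormed ev σ) (hwf' : WellFormed ev (pre ++ σ ++ suf))
    (e1 e2 : ℕ) (h1 : e1 ∈ σ) (h2 : e2 ∈ σ) :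
    SyncPresRace ev (pre ++ σ ++ suf) e1 e2 ↔ SyncPresRace ev σ e1 e2 := by
  constructor
  · rintro ⟨-, -, hc, ρ, hcr, hsp, he1, he2⟩
    exact ⟨h1, h2, hc, σ.filter (· ∈ ρ), hcr.restrict hwf hwf' hsp, syncPres_filter hwf.1 _,
      he1.restrict hwf'.1 h1, he2.restrict hwf'.1 h2⟩
  · rintro ⟨-, -, hc, ρ, hcr, hsp, he1, he2⟩
    exact ⟨by simp [h1], by simp [h2], hc, pre ++ ρ, hcr.prepend hwf hwf',
      hsp.prepend hwf'.1 hcr.wf.1 hcr.subset, he1.prepend hwf'.1, he2.prepend hwf'.1⟩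

open Race in
/-- if the well-formed trace `σ` occurs as a contiguous
subtrace of a well-formed trace `σ'`, then a conflicting pair of `σ` is a
sync-preserving race in `σ'` iff it is a sync-preserving race in `σ`. -/
theorem syncpres_race_subtrace_iff (ev : ℕ → EventData) (σ pre suf : Trace)
    (hwf : WellFormed ev σ) (hwf' : WellFormed ev (pre ++ σ ++ suf))
    (e1 e2 : ℕ) (h1 : e1 ∈ σ) (h2 : e2 ∈ σ) (hc : Conflicting ev e1 e2) :
    SyncPresRace ev (pre ++ σ ++ suf) e1 e2 ↔ SyncPresRace ev σ e1 e2 :=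
  syncpres_race_subtrace_iff_general ev σ pre suf hwf hwf' e1 e2 h1 h2
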